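/- Let m₁, m₂ be positive integers, μ₂ ∈ ℤ, let T ≥ T₀ > 0 satisfy e^{6(T−T₀)} < m₁²m₂ ≤ e^{6T}, let Y > 0, and let x₁, x₂ ∈ ℝ. Suppose there exists a matrix (a b; c d) ∈ SL(2,ℤ) such that the bottom row of the 2×2 matrix (a b; c d)·(1 −μ₂/m₂; 0 1)·diag(m₂^{−1/2}, m₂^{1/2}) has Euclidean norm at most Y^{−1/2}. Then there exists γ ∈ SL(3,ℤ) such that the row vector (0, 0, 1)·γ·M has Euclidean norm at most Y^{−1/2}·e^{2T₀}, where M is the 3×3 matrix with rows (1, x₁, x₂), (0, 1, −μ₂/m₂), (0, 0, 1) multiplied on the right by diag(m₁^{−2/3}m₂^{−1/3}e^{2T}, m₁^{1/3}m₂^{−1/3}e^{−T}, m₁^{1/3}m₂^{2/3}e^{−T}). -/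
import Mathlib


open Matrix

noncomputable section

set_option maxHeartbeats 1000000 in
/-- **Lemma `smalltobigcusp`**: let `m₁, m₂ ≥ 1`, `μ₂ ∈ ℤ`, `T ≥ T₀ > 0` with
`e^{6(T - T₀)} < m₁²m₂ ≤ e^{6T}`, and `Y > 0`.  If some `(a b; c d) ∈ SL(2, ℤ)` makes
the bottom row of `(a b; c d)·(1, -μ₂/m₂; 0, 1)·diag(m₂^{-1/2}, m₂^{1/2})` of norm at
most `Y^{-1/2}`, then some `γ ∈ SL(3, ℤ)` makes the bottom row of `γ·M` of norm at
most `Y^{-1/2} e^{2T₀}`, where `M` is the product of the unipotent matrix with rows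
`(1, x₁, x₂), (0, 1, -μ₂/m₂), (0, 0, 1)` and
`diag(m₁^{-2/3}m₂^{-1/3}e^{2T}, m₁^{1/3}m₂^{-1/3}e^{-T}, m₁^{1/3}m₂^{2/3}e^{-T})`. -/
theorem small_cusp_to_big_cusp
    (m₁ m₂ : ℤ) (hm₁ : 1 ≤ m₁) (hm₂ : 1 ≤ m₂) (μ₂ : ℤ)
    (T T₀ : ℝ) (hT₀ : 0 < T₀) (hT : T₀ ≤ T)
    (hlow : Real.exp (6 * (T - T₀)) < ((m₁ ^ 2 * m₂ : ℤ) : ℝ))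
    (hhigh : ((m₁ ^ 2 * m₂ : ℤ) : ℝ) ≤ Real.exp (6 * T))
    (Y : ℝ) (hY : 0 < Y)
    (x₁ x₂ : ℝ)
    (hSL2 : ∃ A : Matrix (Fin 2) (Fin 2) ℤ, A.det = 1 ∧
      Real.sqrt
          ((((A.map (Int.cast : ℤ → ℝ)) *
              !![(1:ℝ), -(μ₂ : ℝ) / (m₂ : ℝ); 0, 1] *
              Matrix.diagonal ![(m₂ : ℝ) ^ (-(1/2) : ℝ), (m₂ : ℝ) ^ ((1/2) : ℝ)]) 1 0) ^ 2 +
            (((A.map (Int.cast : ℤ → ℝ)) *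
              !![(1:ℝ), -(μ₂ : ℝ) / (m₂ : ℝ); 0, 1] *
              Matrix.diagonal ![(m₂ : ℝ) ^ (-(1/2) : ℝ), (m₂ : ℝ) ^ ((1/2) : ℝ)]) 1 1) ^ 2) ≤
        Y ^ (-(1/2) : ℝ)) :
    ∃ γ : Matrix (Fin 3) (Fin 3) ℤ, γ.det = 1 ∧
      Real.sqrt
          ((((γ.map (Int.cast : ℤ → ℝ)) *
              (!![(1:ℝ), x₁, x₂; 0, 1, -(μ₂ : ℝ) / (m₂ : ℝ); 0, 0, 1] *
                Matrix.diagonal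
                  ![(m₁ : ℝ) ^ (-(2/3) : ℝ) * (m₂ : ℝ) ^ (-(1/3) : ℝ) * Real.exp (2 * T),
                    (m₁ : ℝ) ^ ((1/3) : ℝ) * (m₂ : ℝ) ^ (-(1/3) : ℝ) * Real.exp (-T),
                    (m₁ : ℝ) ^ ((1/3) : ℝ) * (m₂ : ℝ) ^ ((2/3) : ℝ) * Real.exp (-T)])) 2 0) ^ 2 +
            (((γ.map (Int.cast : ℤ → ℝ)) *
              (!![(1:ℝ), x₁, x₂; 0, 1, -(μ₂ : ℝ) / (m₂ : ℝ); 0, 0, 1] *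
                Matrix.diagonal
                  ![(m₁ : ℝ) ^ (-(2/3) : ℝ) * (m₂ : ℝ) ^ (-(1/3) : ℝ) * Real.exp (2 * T),
                    (m₁ : ℝ) ^ ((1/3) : ℝ) * (m₂ : ℝ) ^ (-(1/3) : ℝ) * Real.exp (-T),
                    (m₁ : ℝ) ^ ((1/3) : ℝ) * (m₂ : ℝ) ^ ((2/3) : ℝ) * Real.exp (-T)])) 2 1) ^ 2 +
            (((γ.map (Int.cast : ℤ → ℝ)) *
              (!![(1:ℝ), x₁, x₂; 0, 1, -(μ₂ : ℝ) / (m₂ : ℝ); 0, 0, 1] *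
                Matrix.diagonal
                  ![(m₁ : ℝ) ^ (-(2/3) : ℝ) * (m₂ : ℝ) ^ (-(1/3) : ℝ) * Real.exp (2 * T),
                    (m₁ : ℝ) ^ ((1/3) : ℝ) * (m₂ : ℝ) ^ (-(1/3) : ℝ) * Real.exp (-T),
                    (m₁ : ℝ) ^ ((1/3) : ℝ) * (m₂ : ℝ) ^ ((2/3) : ℝ) * Real.exp (-T)])) 2 2) ^ 2) ≤
        Y ^ (-(1/2) : ℝ) * Real.exp (2 * T₀) := by
  obtain ⟨A, hAdet, hnorm⟩ := hSL2
  refine ⟨!![1,0,0; 0, A 0 0, A 0 1; 0, A 1 0, A 1 1], ?_, ?_⟩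
  · rw [Matrix.det_fin_two] at hAdet
    simp [Matrix.det_fin_three]
    linarith
  · simp [Matrix.mul_apply, Fin.sum_univ_two, Fin.sum_univ_three, Matrix.diagonal_apply, Matrix.vecMul, dotProduct, Matrix.vecHead, Matrix.vecTail] at hnorm ⊢
    have hq : (0:ℝ) < (m₁:ℝ) := by exact_mod_cast lt_of_lt_of_le zero_lt_one hm₁
    have hp : (0:ℝ) < (m₂:ℝ) := by exact_mod_cast lt_of_lt_of_le zero_lt_one hm₂
    set L : ℝ := (m₁:ℝ) ^ (3⁻¹:ℝ) * (m₂:ℝ) ^ ((6:ℝ)⁻¹) * Real.exp (-T) with hLdef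
    have hL0 : 0 ≤ L := by
      exact mul_nonneg (mul_nonneg (Real.rpow_nonneg hq.le _) (Real.rpow_nonneg hp.le _))
        (Real.exp_nonneg _)
    have key : (m₁:ℝ) ^ (3⁻¹:ℝ) * (m₂:ℝ) ^ ((6:ℝ)⁻¹) ≤ Real.exp T := by
      have h1 : (m₁:ℝ) ^ (3⁻¹:ℝ) * (m₂:ℝ) ^ ((6:ℝ)⁻¹) = ((m₁:ℝ)^2 * (m₂:ℝ)) ^ ((6:ℝ)⁻¹) := by
        rw [Real.mul_rpow (by positivity) hp.le, ← Real.rpow_natCast (m₁:ℝ) 2,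
          ← Real.rpow_mul hq.le]
        norm_num
      rw [h1]
      calc ((m₁:ℝ)^2 * (m₂:ℝ)) ^ ((6:ℝ)⁻¹) ≤ (Real.exp (6*T)) ^ ((6:ℝ)⁻¹) := by
            apply Real.rpow_le_rpow (by positivity) _ (by norm_num)
            push_cast at hhigh
            linarith
        _ = Real.exp T := by
            rw [← Real.exp_mul]
            congr 1
            ring
    have hL1 : L ≤ 1 := by
      rw [hLdef]
      calc (m₁:ℝ) ^ (3⁻¹:ℝ) * (m₂:ℝ) ^ ((6:ℝ)⁻¹) * Real.exp (-T)
          ≤ Real.exp T * Real.exp (-T) := mul_le_mul_of_nonneg_right key (Real.exp_nonneg _)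
        _ = 1 := by rw [← Real.exp_add]; simp
    have e1 : (m₁:ℝ) ^ (3⁻¹:ℝ) * (m₂:ℝ) ^ (-3⁻¹:ℝ) * Real.exp (-T) = (m₂:ℝ) ^ (-2⁻¹:ℝ) * L := by
      rw [hLdef, show (-3⁻¹:ℝ) = -2⁻¹ + 6⁻¹ by norm_num, Real.rpow_add hp]
      ring
    have e2' : (m₁:ℝ) ^ (3⁻¹:ℝ) * (m₂:ℝ) ^ ((2:ℝ)/3) * Real.exp (-T) = (m₂:ℝ) ^ (2⁻¹:ℝ) * L := by
      rw [hLdef, show ((2:ℝ)/3) = 2⁻¹ + 6⁻¹ by norm_num, Real.rpow_add hp]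
      ring
    rw [e1, e2']
    set c := ((A 1 0 : ℤ):ℝ) with hcdef
    set d := ((A 1 1 : ℤ):ℝ) with hddef
    have hSnn : (0:ℝ) ≤ (c * (m₂:ℝ) ^ (-2⁻¹:ℝ))^2 +
        ((c * (-(μ₂:ℝ)/(m₂:ℝ)) + d) * (m₂:ℝ) ^ (2⁻¹:ℝ))^2 := by
      positivity
    have hS : (c * (m₂:ℝ) ^ (-2⁻¹:ℝ))^2 +
        ((c * (-(μ₂:ℝ)/(m₂:ℝ)) + d) * (m₂:ℝ) ^ (2⁻¹:ℝ))^2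
        ≤ (Y ^ (-2⁻¹:ℝ))^2 := by
      have h := Real.sq_sqrt hSnn
      nlinarith [hnorm, Real.sqrt_nonneg ((c * (m₂:ℝ) ^ (-2⁻¹:ℝ))^2 +
        ((c * (-(μ₂:ℝ)/(m₂:ℝ)) + d) * (m₂:ℝ) ^ (2⁻¹:ℝ))^2),
        Real.rpow_nonneg hY.le (-2⁻¹:ℝ)]
    have hB : (0:ℝ) ≤ Y ^ (-2⁻¹:ℝ) * Real.exp (2*T₀) := by
      exact mul_nonneg (Real.rpow_nonneg hY.le _) (Real.exp_nonneg _)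
    rw [show Y ^ (-2⁻¹:ℝ) * Real.exp (2*T₀) = Real.sqrt ((Y ^ (-2⁻¹:ℝ) * Real.exp (2*T₀))^2)
      from (Real.sqrt_sq hB).symm]
    apply Real.sqrt_le_sqrt
    have hE : (1:ℝ) ≤ Real.exp (2*T₀) := Real.one_le_exp (by linarith)
    have h2 : L^2 ≤ 1 := by nlinarith
    calc (c * ((m₂:ℝ) ^ (-2⁻¹:ℝ) * L)) ^ 2 +
        (c * (-(μ₂:ℝ) / (m₂:ℝ) * ((m₂:ℝ) ^ (2⁻¹:ℝ) * L)) +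
          d * ((m₂:ℝ) ^ (2⁻¹:ℝ) * L)) ^ 2
        = L^2 * ((c * (m₂:ℝ) ^ (-2⁻¹:ℝ))^2 +
            ((c * (-(μ₂:ℝ)/(m₂:ℝ)) + d) * (m₂:ℝ) ^ (2⁻¹:ℝ))^2) := by ring
      _ ≤ 1 * (Y ^ (-2⁻¹:ℝ))^2 := mul_le_mul h2 hS hSnn zero_le_one
      _ ≤ (Y ^ (-2⁻¹:ℝ) * Real.exp (2*T₀))^2 := by
          have hE2 : (1:ℝ) ≤ (Real.exp (2*T₀))^2 := by nlinarith
          nlinarith [sq_nonneg (Y ^ (-2⁻¹:ℝ)), hE2]
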